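/- Let h ∈ 𝒮(ℝ) be nonzero and real-valued, f ∈ 𝒮(ℝⁿ), θ ∈ S^{n−1}, σ ≠ 0. Then ∫_0^∞ (P_h f)^(σθ, rθ) ĥ(rσ) dr = f̂(σθ) |σ|^{−1} ∫_0^∞ |ĥ(r)|² dr, where (P_h f)^ is the Fourier transform of P_h f in its first variable. -/

import Mathlib

open MeasureTheory Real Complex SchwartzMap
open scoped RealInnerProductSpace

/-- The windowed ray transform `P_h f (u, v) = ∫ f(u + t v) h(t) dt`. -/
noncomputable def windowedRay {n : ℕ} (h : ℝ → ℂ) (f : EuclideanSpace ℝ (Fin n) → ℂ)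
    (u v : EuclideanSpace ℝ (Fin n)) : ℂ :=
  ∫ t : ℝ, f (u + t • v) * h t

/-- One-dimensional Fourier transform with convention `ĝ(ξ) = ∫ g(t) e^{-i t ξ} dt`. -/
noncomputable def ft1 (g : ℝ → ℂ) (ξ : ℝ) : ℂ :=
  ∫ t : ℝ, g t * Complex.exp (-(Complex.I * t * ξ))

/-- n-dimensional Fourier transform with convention `ĝ(ξ) = ∫ g(x) e^{-i x·ξ} dx`. -/
noncomputable def ftn {n : ℕ} (g : EuclideanSpace ℝ (Fin n) → ℂ)
    (ξ : EuclideanSpace ℝ (Fin n)) : ℂ :=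
  ∫ x : EuclideanSpace ℝ (Fin n), g x * Complex.exp (-(Complex.I * (⟪x, ξ⟫ : ℝ)))

/-! Fubini and translation invariance of Lebesgue measure give the slice identity
`(P_h f)^(ξ, v) = f̂(ξ) ĥ(-⟪v, ξ⟫)`. On `v = rθ`, `ξ = σθ` the integrand becomes
`f̂(σθ) ĥ(-rσ) ĥ(rσ) = f̂(σθ) |ĥ(rσ)|²`, because `ĥ(-s) = conj ĥ(s)` for real `h`; since `|ĥ|²`
is even, the substitution `r ↦ r / |σ|` turns `∫₀^∞ |ĥ(rσ)|² dr` into `|σ|⁻¹ ∫₀^∞ |ĥ|²`. -/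

section

variable {n : ℕ}

lemma ftn_comp_add_right (f : EuclideanSpace ℝ (Fin n) → ℂ) (w ξ : EuclideanSpace ℝ (Fin n)) :
    ftn (fun u => f (u + w)) ξ = Complex.exp (Complex.I * (⟪w, ξ⟫ : ℝ)) * ftn f ξ := by
  unfold ftn
  rw [← integral_const_mul, ← integral_add_right_eq_self (fun x =>
    Complex.exp (Complex.I * (⟪w, ξ⟫ : ℝ)) * (f x * Complex.exp (-(Complex.I * (⟪x, ξ⟫ : ℝ))))) w]
  congr 1 with u
  rw [mul_left_comm, ← Complex.exp_add, inner_add_left]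
  push_cast
  ring_nf

lemma integrable_windowedRay_ftn_integrand (h : SchwartzMap ℝ ℂ)
    (f : SchwartzMap (EuclideanSpace ℝ (Fin n)) ℂ) (v ξ : EuclideanSpace ℝ (Fin n)) :
    Integrable (fun p : EuclideanSpace ℝ (Fin n) × ℝ =>
      f (p.1 + p.2 • v) * h p.2 * Complex.exp (-(Complex.I * (⟪p.1, ξ⟫ : ℝ))))
      (volume.prod volume) := by
  have hphase : ∀ u : EuclideanSpace ℝ (Fin n), ‖Complex.exp (-(Complex.I * (⟪u, ξ⟫ : ℝ)))‖ = 1 :=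
    fun u => by simp [Complex.norm_exp]
  have hmeas : AEStronglyMeasurable (fun p : EuclideanSpace ℝ (Fin n) × ℝ =>
      f (p.1 + p.2 • v) * h p.2 * Complex.exp (-(Complex.I * (⟪p.1, ξ⟫ : ℝ))))
      (volume.prod volume) :=
    Continuous.aestronglyMeasurable (by fun_prop)
  refine (integrable_prod_iff' hmeas).2 ⟨.of_forall fun t => ?_, ?_⟩
  · have hshift : Integrable (fun u => f (u + t • v) * h t) :=
      (f.integrable.comp_add_right (t • v)).mul_const (h t)
    exact hshift.mul_bdd (Continuous.aestronglyMeasurable (by fun_prop))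
      (.of_forall fun u => (hphase u).le)
  · have hnorm : ∀ t : ℝ, ∫ u, ‖f (u + t • v) * h t * Complex.exp (-(Complex.I * (⟪u, ξ⟫ : ℝ)))‖
        = (∫ u, ‖f u‖) * ‖h t‖ := fun t => by
      simp only [norm_mul, hphase, mul_one]
      rw [integral_mul_const, integral_add_right_eq_self (fun u => ‖f u‖)]
    simpa only [hnorm] using h.integrable.norm.const_mul _

lemma ftn_windowedRay (h : SchwartzMap ℝ ℂ) (f : SchwartzMap (EuclideanSpace ℝ (Fin n)) ℂ)
    (v ξ : EuclideanSpace ℝ (Fin n)) :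
    ftn (fun u => windowedRay h f u v) ξ = ftn f ξ * ft1 h (-⟪v, ξ⟫) := by
  calc ftn (fun u => windowedRay h f u v) ξ
      = ∫ t : ℝ, ∫ u, f (u + t • v) * h t * Complex.exp (-(Complex.I * (⟪u, ξ⟫ : ℝ))) := by
        unfold ftn windowedRay
        simp_rw [← integral_mul_const]
        exact integral_integral_swap (integrable_windowedRay_ftn_integrand h f v ξ)
    _ = ∫ t : ℝ, ftn f ξ * (h t * Complex.exp (-(Complex.I * t * (-⟪v, ξ⟫ : ℝ)))) := by
        congr 1 with t
        have hshift := ftn_comp_add_right f (t • v) ξ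
        unfold ftn at hshift ⊢
        simp_rw [mul_right_comm _ (h t), integral_mul_const, hshift, real_inner_smul_left]
        push_cast
        ring_nf
    _ = ftn f ξ * ft1 h (-⟪v, ξ⟫) := integral_const_mul _ _

lemma ft1_neg_of_im_eq_zero (h : ℝ → ℂ) (hreal : ∀ t : ℝ, (h t).im = 0) (s : ℝ) :
    ft1 h (-s) = starRingEnd ℂ (ft1 h s) := by
  unfold ft1
  rw [← integral_conj]
  congr 1 with t
  rw [map_mul, ← Complex.exp_conj, Complex.conj_eq_iff_im.2 (hreal t)]
  simp only [map_neg, map_mul, Complex.conj_I, Complex.conj_ofReal]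
  push_cast
  ring_nf

lemma ft1_neg_mul_self_of_im_eq_zero (h : ℝ → ℂ) (hreal : ∀ t : ℝ, (h t).im = 0) (s : ℝ) :
    ft1 h (-s) * ft1 h s = ((‖ft1 h s‖ ^ 2 : ℝ) : ℂ) := by
  rw [ft1_neg_of_im_eq_zero h hreal, RCLike.conj_mul]
  norm_cast

lemma integral_Ioi_comp_mul_right_of_even {E : Type*} [NormedAddCommGroup E] [NormedSpace ℝ E]
    {g : ℝ → E} (hg : ∀ x, g (-x) = g x) {σ : ℝ} (hσ : σ ≠ 0) :
    ∫ r in Set.Ioi (0 : ℝ), g (r * σ) = |σ|⁻¹ • ∫ r in Set.Ioi (0 : ℝ), g r := by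
  have habs : ∀ r, g (r * σ) = g (r * |σ|) := fun r => by
    rcases abs_choice σ with hc | hc <;> simp [hc, hg]
  simpa only [habs, zero_mul] using integral_comp_mul_right_Ioi g 0 (abs_pos.2 hσ)

end

theorem stmt6_general {n : ℕ} (h : SchwartzMap ℝ ℂ) (hreal : ∀ t : ℝ, (h t).im = 0)
    (f : SchwartzMap (EuclideanSpace ℝ (Fin n)) ℂ)
    (θ : EuclideanSpace ℝ (Fin n)) (hθ : ‖θ‖ = 1) (σ : ℝ) (hσ : σ ≠ 0) :
    (∫ r in Set.Ioi (0 : ℝ), ftn (fun u => windowedRay h f u (r • θ)) (σ • θ) * ft1 h (r * σ))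
      = ftn f (σ • θ) * ((|σ|⁻¹ : ℝ) : ℂ) *
          ((∫ r in Set.Ioi (0 : ℝ), ‖ft1 h r‖ ^ 2 : ℝ) : ℂ) := by
  have hinner : ∀ r : ℝ, ⟪r • θ, σ • θ⟫ = r * σ := fun r => by
    rw [real_inner_smul_left, real_inner_smul_right, real_inner_self_eq_norm_sq, hθ]
    ring
  have hintegrand : ∀ r : ℝ,
      ftn (fun u => windowedRay h f u (r • θ)) (σ • θ) * ft1 h (r * σ)
        = ftn f (σ • θ) * ((‖ft1 h (r * σ)‖ ^ 2 : ℝ) : ℂ) := fun r => by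
    rw [ftn_windowedRay, hinner, mul_assoc, ft1_neg_mul_self_of_im_eq_zero h hreal]
  have heven : ∀ s : ℝ, ‖ft1 h (-s)‖ ^ 2 = ‖ft1 h s‖ ^ 2 := fun s => by
    rw [ft1_neg_of_im_eq_zero h hreal, RCLike.norm_conj]
  simp_rw [hintegrand]
  rw [integral_const_mul, integral_complex_ofReal,
    integral_Ioi_comp_mul_right_of_even (g := fun s => ‖ft1 h s‖ ^ 2) heven hσ, smul_eq_mul,
    Complex.ofReal_mul, mul_assoc]

theorem stmt6 {n : ℕ} (h : SchwartzMap ℝ ℂ) (hh : h ≠ 0) (hreal : ∀ t : ℝ, (h t).im = 0)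
    (f : SchwartzMap (EuclideanSpace ℝ (Fin n)) ℂ)
    (θ : EuclideanSpace ℝ (Fin n)) (hθ : ‖θ‖ = 1) (σ : ℝ) (hσ : σ ≠ 0) :
    (∫ r in Set.Ioi (0 : ℝ), ftn (fun u => windowedRay h f u (r • θ)) (σ • θ) * ft1 h (r * σ))
      = ftn f (σ • θ) * ((|σ|⁻¹ : ℝ) : ℂ) *
          ((∫ r in Set.Ioi (0 : ℝ), ‖ft1 h r‖ ^ 2 : ℝ) : ℂ) :=
  stmt6_general h hreal f θ hθ σ hσ
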